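/- arXiv:1707.04562 — 4 statements merged into one kernel-verified Lean document; each statement's English description precedes it below -/
import Mathlib

section
/- Let V be an n×m real matrix with rank V = r, and let I : Fin r → Fin n and J : Fin r → Fin m be injective index maps such that the r×r submatrix V.submatrix I J is invertible. Then V admits the cross (skeleton) decomposition V = (V.submatrix id J) * (V.submatrix I J)⁻¹ * (V.submatrix I id). -/
/-!
Let `C = V.submatrix id J`, `A = V.submatrix I J` and `R = V.submatrix I id`. The columns of `C`
are columns of `V`, and `C` contains the invertible block `A`, so `rank V = r = rank A ≤ rank C`:
the column spaces of `C` and `V` coincide and `V = C * X` for some `X`. Restricting to the rows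
`I` gives `R = A * X`, hence `X = A⁻¹ * R`.
-/

namespace Matrix

variable {m n o ι R K : Type*} [Fintype n] [Fintype o]

theorem range_mulVecLin_submatrix_id_le [CommSemiring R] (A : Matrix m n R) (c : o → n) :
    LinearMap.range (A.submatrix id c).mulVecLin ≤ LinearMap.range A.mulVecLin := by
  rw [range_mulVecLin, range_mulVecLin]
  exact Submodule.span_mono fun v ⟨j, hj⟩ => ⟨c j, hj⟩

theorem exists_eq_mul_of_range_mulVecLin_le [CommSemiring R] {A : Matrix m n R}
    {B : Matrix m o R} (h : LinearMap.range A.mulVecLin ≤ LinearMap.range B.mulVecLin) :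
    ∃ X : Matrix o n R, A = B * X := by
  classical
  have hcol : ∀ j, ∃ x, B *ᵥ x = A.col j := fun j =>
    h ⟨Pi.single j 1, mulVec_single_one A j⟩
  choose x hx using hcol
  exact ⟨(of x)ᵀ, ext fun i j => (congrFun (hx j) i).symm⟩

theorem range_mulVecLin_submatrix_id_eq [Field K] (A : Matrix m n K) (c : o → n)
    (h : A.rank ≤ (A.submatrix id c).rank) :
    LinearMap.range (A.submatrix id c).mulVecLin = LinearMap.range A.mulVecLin :=
  Submodule.eq_of_le_of_finrank_le (range_mulVecLin_submatrix_id_le A c) h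

theorem eq_submatrix_mul_nonsing_inv_mul_submatrix [Field K] [Fintype ι] [DecidableEq ι]
    (A : Matrix m n K) (I : ι → m) (J : ι → n) (hrank : A.rank ≤ Fintype.card ι)
    (hinv : IsUnit (A.submatrix I J)) :
    A = A.submatrix id J * (A.submatrix I J)⁻¹ * A.submatrix I id := by
  have hcore : Fintype.card ι ≤ (A.submatrix id J).rank := by
    rw [← rank_of_isUnit _ hinv]
    exact rank_submatrix_le (A.submatrix id J) I id
  obtain ⟨X, hX⟩ := exists_eq_mul_of_range_mulVecLin_le
    (range_mulVecLin_submatrix_id_eq A J (hrank.trans hcore)).ge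
  have hrows : A.submatrix I id = A.submatrix I J * X := congrArg (submatrix · I id) hX
  rwa [hrows, Matrix.mul_assoc,
    nonsing_inv_mul_cancel_left _ X ((isUnit_iff_isUnit_det _).mp hinv)]

end Matrix

theorem cross_decomposition_general {n m r : ℕ} (V : Matrix (Fin n) (Fin m) ℝ)
    (hrank : V.rank = r)
    (I : Fin r → Fin n) (J : Fin r → Fin m)
    (hinv : IsUnit (V.submatrix I J)) :
    V = V.submatrix id J * (V.submatrix I J)⁻¹ * V.submatrix I id :=
  V.eq_submatrix_mul_nonsing_inv_mul_submatrix I J (by simp [hrank]) hinv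

/-- **Skeleton (cross) decomposition.** If `V` is an `n × m` real matrix of rank `r`,
and `I`, `J` are injective row/column index selections such that the `r × r`
intersection submatrix `V.submatrix I J` is invertible, then
`V = (V.submatrix id J) * (V.submatrix I J)⁻¹ * (V.submatrix I id)`. -/
theorem cross_decomposition {n m r : ℕ} (V : Matrix (Fin n) (Fin m) ℝ)
    (hrank : V.rank = r)
    (I : Fin r → Fin n) (J : Fin r → Fin m)
    (hI : Function.Injective I) (hJ : Function.Injective J)
    (hinv : IsUnit (V.submatrix I J)) :
    V = V.submatrix id J * (V.submatrix I J)⁻¹ * V.submatrix I id :=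
  cross_decomposition_general V hrank I J hinv
end

section
/- Let Q be an n×r real matrix, R an invertible r×r real matrix, and set V = Q * R. Let I : Fin r → Fin n be an index map such that the r×r submatrix Q.submatrix I id is invertible. Then V.submatrix I id is invertible and V * (V.submatrix I id)⁻¹ = Q * (Q.submatrix I id)⁻¹; that is, the cross factor is invariant under replacing a matrix by the orthogonal factor of its QR decomposition. -/
namespace Matrix

theorem submatrix_id_mul {l m n α : Type*} [Fintype n] [NonUnitalNonAssocSemiring α]
    (M : Matrix m n α) (N : Matrix n l α) (e : l → m) :
    (M * N).submatrix e id = M.submatrix e id * N :=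
  submatrix_mul M N e id id Function.bijective_id

variable {m n α : Type*} [Fintype n] [DecidableEq n] [CommRing α]

noncomputable def crossFactor (V : Matrix m n α) (I : n → m) : Matrix m n α :=
  V * (V.submatrix I id)⁻¹

/-- `(A * R)⁻¹ = R⁻¹ * A⁻¹` holds even for singular `A`, whose nonsingular inverse is `0`. -/
theorem crossFactor_mul_of_isUnit (Q : Matrix m n α) {R : Matrix n n α} (hR : IsUnit R)
    (I : n → m) : crossFactor (Q * R) I = crossFactor Q I := by
  rw [crossFactor, crossFactor, submatrix_id_mul, mul_inv_rev, Matrix.mul_assoc,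
    ← Matrix.mul_assoc R, mul_nonsing_inv R ((isUnit_iff_isUnit_det R).mp hR), Matrix.one_mul]

end Matrix

/-- **Invariance of the cross factor under QR orthogonalization.**
If `V = Q * R` with `R` invertible and the pivot row submatrix `Q.submatrix I id`
is invertible, then `V.submatrix I id` is invertible and
`V * (V.submatrix I id)⁻¹ = Q * (Q.submatrix I id)⁻¹`. -/
theorem cross_factor_qr_invariant {n r : ℕ}
    (Q : Matrix (Fin n) (Fin r) ℝ) (R : Matrix (Fin r) (Fin r) ℝ)
    (hR : IsUnit R) (V : Matrix (Fin n) (Fin r) ℝ) (hV : V = Q * R)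
    (I : Fin r → Fin n) (hQ : IsUnit (Q.submatrix I id)) :
    IsUnit (V.submatrix I id) ∧
      V * (V.submatrix I id)⁻¹ = Q * (Q.submatrix I id)⁻¹ := by
  subst hV
  exact ⟨Matrix.submatrix_id_mul Q R I ▸ hQ.mul hR, Matrix.crossFactor_mul_of_isUnit Q hR I⟩
end

section
/- Let d ≥ 1, with mode sizes n : Fin d → ℕ, matrix TT ranks R : Fin (d+1) → ℕ and vector TT ranks r : Fin (d+1) → ℕ. For each k : Fin d let A k : Fin (n k) → Fin (n k) → Matrix (Fin (R k.castSucc)) (Fin (R k.succ)) ℝ be the cores of a matrix in TT format and V k : Fin (n k) → Matrix (Fin (r k.castSucc)) (Fin (r k.succ)) ℝ the cores of a vector in TT format. Then for every multi-index i : (k : Fin d) → Fin (n k), ∑_{j : (k : Fin d) → Fin (n k)} (A 0 (i 0) (j 0) * ⋯ * A (d-1) (i (d-1)) (j (d-1))) ⊗ₖ (V 0 (j 0) * ⋯ * V (d-1) (j (d-1))) = (∑_{j₀} A 0 (i 0) j₀ ⊗ₖ V 0 j₀) * ⋯ * (∑_{j_{d-1}} A (d-1) (i (d-1)) j_{d-1}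 ⊗ₖ V (d-1) j_{d-1}), under the canonical identification of the iterated product index types. In particular, the matrix–vector product of a TT matrix and a TT vector is represented exactly in TT format with cores W k (i_k) = ∑_{j_k} A k (i_k) (j_k) ⊗ₖ V k (j_k) and ranks R k · r k. -/
/-!
By the mixed-product property of `⊗ₖ`, the Kronecker product of two chain products is the
chain product of the core-wise Kronecker products. Matrix multiplication is multilinear, so
a sum over multi-indices `j` of a chain product whose `k`-th core depends only on `j k`
is the chain product of the summed cores.
-/

open Kronecker

/-- Chain (matrix-product-state) product of a family of matrices with compatible
consecutive dimensions `ι 0, ι 1, …, ι d`. -/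
def chainProd : (d : ℕ) → (ι : Fin (d + 1) → Type) → [∀ k, Fintype (ι k)] →
    [∀ k, DecidableEq (ι k)] →
    ((k : Fin d) → Matrix (ι k.castSucc) (ι k.succ) ℝ) → Matrix (ι 0) (ι (Fin.last d)) ℝ
  | 0, ι, _, instD, _ => letI := instD 0; (1 : Matrix (ι 0) (ι 0) ℝ)
  | d + 1, ι, instF, instD, M =>
      M 0 * @chainProd d (fun k => ι k.succ) (fun k => instF k.succ) (fun k => instD k.succ)
        (fun k => M k.succ)

theorem chainProd_kronecker (d : ℕ) (ι κ : Fin (d + 1) → Type)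
    [∀ k, Fintype (ι k)] [∀ k, DecidableEq (ι k)] [∀ k, Fintype (κ k)] [∀ k, DecidableEq (κ k)]
    (A : (k : Fin d) → Matrix (ι k.castSucc) (ι k.succ) ℝ)
    (B : (k : Fin d) → Matrix (κ k.castSucc) (κ k.succ) ℝ) :
    chainProd d ι A ⊗ₖ chainProd d κ B =
      chainProd d (fun k => ι k × κ k) (fun k => A k ⊗ₖ B k) := by
  induction d with
  | zero => exact Matrix.one_kronecker_one
  | succ d ih =>
    exact (Matrix.mul_kronecker_mul _ _ _ _).trans (congrArg (A 0 ⊗ₖ B 0 * ·) (ih _ _ _ _))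

theorem sum_chainProd (d : ℕ) (ι : Fin (d + 1) → Type) [∀ k, Fintype (ι k)]
    [∀ k, DecidableEq (ι k)] (σ : Fin d → Type*) [∀ k, Fintype (σ k)]
    (M : (k : Fin d) → σ k → Matrix (ι k.castSucc) (ι k.succ) ℝ) :
    ∑ j : ((k : Fin d) → σ k), chainProd d ι (fun k => M k (j k)) =
      chainProd d ι (fun k => ∑ x, M k x) := by
  induction d with
  | zero => simp [chainProd]
  | succ d ih =>
    -- `chainProd (d + 1)` unfolds definitionally to `M 0 _ * chainProd d _`.
    rw [← (Fin.consEquiv σ).sum_comp, Fintype.sum_prod_type]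
    refine (Finset.sum_congr rfl fun x _ => ?_).trans (Matrix.sum_mul _ _ _).symm
    exact (Matrix.mul_sum _ _ _).symm.trans (congrArg (M 0 x * ·) (ih _ _ _))

theorem tt_matvec_in_tt_format_general
    (d : ℕ) (n : Fin d → ℕ) (R r : Fin (d + 1) → ℕ)
    (A : (k : Fin d) → Fin (n k) → Fin (n k) →
        Matrix (Fin (R k.castSucc)) (Fin (R k.succ)) ℝ)
    (V : (k : Fin d) → Fin (n k) → Matrix (Fin (r k.castSucc)) (Fin (r k.succ)) ℝ)
    (i : (k : Fin d) → Fin (n k)) :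
    ∑ j : ((k : Fin d) → Fin (n k)),
        (chainProd d (fun k => Fin (R k)) fun k => A k (i k) (j k)) ⊗ₖ
          (chainProd d (fun k => Fin (r k)) fun k => V k (j k)) =
      chainProd d (fun k => Fin (R k) × Fin (r k))
        (fun k => ∑ jk : Fin (n k), A k (i k) jk ⊗ₖ V k jk) := by
  simp only [chainProd_kronecker]
  exact sum_chainProd d (fun k => Fin (R k) × Fin (r k)) (fun k => Fin (n k))
    fun k jk => A k (i k) jk ⊗ₖ V k jk

/-- **TT matrix–vector product is exact in TT format.** For a matrix in TT format with
cores `A` (ranks `R`) and a vector in TT format with cores `V` (ranks `r`), the `i`-th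
entry of the matrix–vector product, i.e. the sum over multi-indices `j` of the Kronecker
product of the two chain products, equals the chain product of the cores
`W k i_k = ∑ j_k, A k i_k j_k ⊗ₖ V k j_k`, whose ranks are `R k * r k`. -/
theorem tt_matvec_in_tt_format
    (d : ℕ) (hd : 1 ≤ d) (n : Fin d → ℕ) (R r : Fin (d + 1) → ℕ)
    (A : (k : Fin d) → Fin (n k) → Fin (n k) →
        Matrix (Fin (R k.castSucc)) (Fin (R k.succ)) ℝ)
    (V : (k : Fin d) → Fin (n k) → Matrix (Fin (r k.castSucc)) (Fin (r k.succ)) ℝ)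
    (i : (k : Fin d) → Fin (n k)) :
    ∑ j : ((k : Fin d) → Fin (n k)),
        (chainProd d (fun k => Fin (R k)) fun k => A k (i k) (j k)) ⊗ₖ
          (chainProd d (fun k => Fin (r k)) fun k => V k (j k)) =
      chainProd d (fun k => Fin (R k) × Fin (r k))
        (fun k => ∑ jk : Fin (n k), A k (i k) jk ⊗ₖ V k jk) :=
  tt_matvec_in_tt_format_general d n R r A V i
end

section
/- Let S : ℕ, λ : Fin (S+1) → ℝ, and let p, q : ℝ → ℝ be measurable nonnegative functions with ∫ p(x) dx = ∫ q(x) dx = 1 (probability densities with respect to Lebesgue measure), where q(x) = exp(∑_{s=0}^{S} λ_s x^s). Assume that for every s ≤ S the functions x ↦ x^s * p(x) and x ↦ x^s * q(x) are integrable with ∫ x^s p(x) dx = ∫ x^s q(x) dx (matching moments up to order S), and that x ↦ p(x) * log(p(x)) and x ↦ q(x) * log(q(x)) are integrable (with the convention 0 * log 0 = 0). Then the Shannon entropy of p is at most that of q: ∫ −p(x) log(p(x)) dx ≤ ∫ −q(x) log(q(x)) dx; that is, the exponential-family density q maximizes the entropy among all densities with the same moments up to order S. -/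
/-! Gibbs' inequality `∫ p log q ≤ ∫ p log p` holds for any two probability densities `p`, `q`
(pointwise it is `log t ≤ t - 1` at `t = q / p`). When `log q = ∑ λₛ xˢ` is a polynomial,
`∫ p log q` only depends on the moments of `p` up to order `S`, so it equals `∫ q log q`. -/

open MeasureTheory Real

theorem sub_le_mul_log_sub_mul_log {a b : ℝ} (ha : 0 ≤ a) (hb : 0 < b) :
    a - b ≤ a * log a - a * log b := by
  rcases ha.eq_or_lt with rfl | ha
  · simpa using hb.le
  · have hlog : log (b / a) ≤ b / a - 1 := log_le_sub_one_of_pos (by positivity)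
    rw [log_div hb.ne' ha.ne'] at hlog
    have : a * (log b - log a) ≤ a * (b / a - 1) := mul_le_mul_of_nonneg_left hlog ha.le
    rw [mul_sub, mul_sub, mul_div_cancel₀ _ ha.ne'] at this
    linarith

theorem mul_sum_const_mul_eq_sum_const_mul_mul {α ι : Type*} [Fintype ι] (c : ι → ℝ)
    (T : ι → α → ℝ) (p : α → ℝ) :
    (fun x => p x * ∑ i, c i * T i x) = fun x => ∑ i, c i * (T i x * p x) := by
  ext x
  rw [Finset.mul_sum]
  exact Finset.sum_congr rfl fun i _ => by ring

section

variable {α : Type*} [MeasurableSpace α] {μ : Measure α} {p q : α → ℝ}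

theorem integral_mul_log_le_integral_mul_log_self (hp : 0 ≤ᵐ[μ] p) (hq : ∀ᵐ x ∂μ, 0 < q x)
    (hp_int : Integrable p μ) (hq_int : Integrable q μ) (h_mass : ∫ x, q x ∂μ ≤ ∫ x, p x ∂μ)
    (hplogp : Integrable (fun x => p x * log (p x)) μ)
    (hplogq : Integrable (fun x => p x * log (q x)) μ) :
    ∫ x, p x * log (q x) ∂μ ≤ ∫ x, p x * log (p x) ∂μ := by
  have h_pointwise : ∫ x, (p x - q x) ∂μ ≤ ∫ x, (p x * log (p x) - p x * log (q x)) ∂μ :=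
    integral_mono_ae (hp_int.sub hq_int) (hplogp.sub hplogq) <| by
      filter_upwards [hp, hq] with x hpx hqx using sub_le_mul_log_sub_mul_log hpx hqx
  rw [integral_sub hp_int hq_int, integral_sub hplogp hplogq] at h_pointwise
  linarith

variable {ι : Type*} [Fintype ι] {c : ι → ℝ} {T : ι → α → ℝ}

theorem integrable_mul_sum_const_mul (hp : ∀ i, Integrable (fun x => T i x * p x) μ) :
    Integrable (fun x => p x * ∑ i, c i * T i x) μ := by
  rw [mul_sum_const_mul_eq_sum_const_mul_mul]
  exact integrable_finsetSum _ fun i _ => (hp i).const_mul (c i)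

theorem integral_mul_sum_const_mul_eq_of_moments_eq
    (hp : ∀ i, Integrable (fun x => T i x * p x) μ) (hq : ∀ i, Integrable (fun x => T i x * q x) μ)
    (h_moments : ∀ i, ∫ x, T i x * p x ∂μ = ∫ x, T i x * q x ∂μ) :
    ∫ x, p x * ∑ i, c i * T i x ∂μ = ∫ x, q x * ∑ i, c i * T i x ∂μ := by
  rw [mul_sum_const_mul_eq_sum_const_mul_mul, mul_sum_const_mul_eq_sum_const_mul_mul,
    integral_finsetSum _ fun i _ => (hp i).const_mul (c i),
    integral_finsetSum _ fun i _ => (hq i).const_mul (c i)]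
  simp only [integral_const_mul, h_moments]

end

theorem maxEntropy_exponential_family_general (S : ℕ) (lam : Fin (S + 1) → ℝ) (p q : ℝ → ℝ)
    (hp_nonneg : ∀ x, 0 ≤ p x)
    (hq_def : ∀ x, q x = Real.exp (∑ s : Fin (S + 1), lam s * x ^ (s : ℕ)))
    (hp_int : Integrable p) (hq_int : Integrable q)
    (hp_one : ∫ x : ℝ, p x = 1) (hq_one : ∫ x : ℝ, q x = 1)
    (hmom_p : ∀ s : Fin (S + 1), Integrable fun x : ℝ => x ^ (s : ℕ) * p x)
    (hmom_q : ∀ s : Fin (S + 1), Integrable fun x : ℝ => x ^ (s : ℕ) * q x)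
    (hmom : ∀ s : Fin (S + 1), ∫ x : ℝ, x ^ (s : ℕ) * p x = ∫ x : ℝ, x ^ (s : ℕ) * q x)
    (hplogp : Integrable fun x : ℝ => p x * Real.log (p x)) :
    ∫ x : ℝ, -(p x * Real.log (p x)) ≤ ∫ x : ℝ, -(q x * Real.log (q x)) := by
  have hq_pos : ∀ x, 0 < q x := fun x => hq_def x ▸ exp_pos _
  have hlog_q : ∀ x, log (q x) = ∑ s : Fin (S + 1), lam s * x ^ (s : ℕ) := fun x => by
    rw [hq_def, log_exp]
  have hplogq : Integrable fun x => p x * log (q x) := by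
    simpa only [hlog_q] using integrable_mul_sum_const_mul (c := lam) hmom_p
  have h_cross : ∫ x, p x * log (q x) = ∫ x, q x * log (q x) := by
    simpa only [hlog_q] using
      integral_mul_sum_const_mul_eq_of_moments_eq (c := lam) hmom_p hmom_q hmom
  have h_gibbs := integral_mul_log_le_integral_mul_log_self
    (Filter.Eventually.of_forall hp_nonneg) (Filter.Eventually.of_forall hq_pos) hp_int hq_int
    (by rw [hp_one, hq_one]) hplogp hplogq
  rw [integral_neg, integral_neg, neg_le_neg_iff]
  linarith

/-- **Maximum entropy property of the exponential family.** Let `p` and `q` be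
probability densities on `ℝ` (with respect to Lebesgue measure), where
`q x = exp (∑ s, λ s * x ^ s)` is an exponential-family density, and suppose the
moments of `p` and `q` agree up to order `S` (all being integrable). If `p log p`
and `q log q` are integrable (with the convention `0 * log 0 = 0`, which holds
automatically since `Real.log 0 = 0`), then the Shannon entropy of `p` is at most
the Shannon entropy of `q`. -/
theorem maxEntropy_exponential_family (S : ℕ) (lam : Fin (S + 1) → ℝ) (p q : ℝ → ℝ)
    (hp_meas : Measurable p) (hq_meas : Measurable q)
    (hp_nonneg : ∀ x, 0 ≤ p x) (hq_nonneg : ∀ x, 0 ≤ q x)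
    (hq_def : ∀ x, q x = Real.exp (∑ s : Fin (S + 1), lam s * x ^ (s : ℕ)))
    (hp_int : Integrable p) (hq_int : Integrable q)
    (hp_one : ∫ x : ℝ, p x = 1) (hq_one : ∫ x : ℝ, q x = 1)
    (hmom_p : ∀ s : Fin (S + 1), Integrable fun x : ℝ => x ^ (s : ℕ) * p x)
    (hmom_q : ∀ s : Fin (S + 1), Integrable fun x : ℝ => x ^ (s : ℕ) * q x)
    (hmom : ∀ s : Fin (S + 1), ∫ x : ℝ, x ^ (s : ℕ) * p x = ∫ x : ℝ, x ^ (s : ℕ) * q x)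
    (hplogp : Integrable fun x : ℝ => p x * Real.log (p x))
    (hqlogq : Integrable fun x : ℝ => q x * Real.log (q x)) :
    ∫ x : ℝ, -(p x * Real.log (p x)) ≤ ∫ x : ℝ, -(q x * Real.log (q x)) :=
  maxEntropy_exponential_family_general S lam p q hp_nonneg hq_def hp_int hq_int hp_one hq_one
    hmom_p hmom_q hmom hplogp
end
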